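/- arXiv:0907.2157 — 4 statements merged into one kernel-verified Lean document; each statement's English description precedes it below -/
import Mathlib

section
/- A prime word has no proper border: if u is primitive and lexicographically minimal (or maximal) among all its cyclic rotations, then no nonempty word w with w ≠ u is both a prefix and a suffix of u. -/
def listPow {A : Type*} (r : List A) (k : ℕ) : List A :=
  (List.replicate k r).flatten

/-- A word is primitive if it is not a proper power of a shorter word. -/
def Primitive {A : Type*} (u : List A) : Prop :=
  u ≠ [] ∧ ∀ (r : List A) (k : ℕ), u = listPow r k → u = r

/-- A prime word: primitive and lexicographically minimal or maximal in the
class of its cyclic rotations. -/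
def PrimeWord {A : Type*} [LinearOrder A] (u : List A) : Prop :=
  Primitive u ∧ ((∀ v, u ~r v → u ≤ v) ∨ (∀ v, u ~r v → v ≤ u))

/-!
If `w` is a proper border of `u`, then `u = w x = y w` with `x, y` nonempty. Comparing `u` with
its rotations `x w` and `w y` shows `x ≤ y` and `y ≤ x`, so `x = y` and `w`, `x` commute.
Commuting words are powers of a common word `t`, so `u = t ^ (m + k)` with `m, k ≥ 1`,
contradicting primitivity.
-/

section listPow

variable {A : Type*}

lemma listPow_add (r : List A) (m k : ℕ) : listPow r (m + k) = listPow r m ++ listPow r k := by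
  simp only [listPow, ← List.replicate_append_replicate, List.flatten_append]

lemma length_listPow (r : List A) (k : ℕ) : (listPow r k).length = k * r.length := by
  simp [listPow, List.sum_replicate]

-- The first Lyndon–Schützenberger theorem.
theorem exists_eq_listPow_of_append_comm {w x : List A} (h : w ++ x = x ++ w) :
    ∃ t m k, w = listPow t m ∧ x = listPow t k := by
  induction hn : w.length + x.length using Nat.strong_induction_on generalizing w x with
  | _ n ih =>
  wlog hle : w.length ≤ x.length generalizing w x
  · obtain ⟨t, m, k, hw, hx⟩ := this h.symm (by omega) (by omega)
    exact ⟨t, k, m, hx, hw⟩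
  obtain rfl | hw := eq_or_ne w []
  · exact ⟨x, 0, 1, rfl, by simp [listPow]⟩
  obtain ⟨z, rfl⟩ : w <+: x :=
    List.prefix_of_prefix_length_le (h ▸ List.prefix_append w x) (List.prefix_append x w) hle
  have hz : w ++ z = z ++ w := by simpa using h
  have hlt : w.length + z.length < n := by simpa [← hn] using List.length_pos_iff.2 hw
  obtain ⟨t, m, k, rfl, rfl⟩ := ih _ hlt hz rfl
  exact ⟨t, m, m + k, rfl, (listPow_add t m k).symm⟩

theorem Primitive.eq_one_of_eq_listPow {u t : List A} {n : ℕ} (hu : Primitive u)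
    (h : u = listPow t n) : n = 1 := by
  have hlen := congrArg List.length h
  rw [length_listPow, ← hu.2 t n h] at hlen
  exact Nat.eq_of_mul_eq_mul_right (List.length_pos_iff.2 hu.1) (by rw [one_mul, ← hlen])

end listPow

namespace List

variable {A : Type*}

theorem Lex.append_right_of_length_eq {r : A → A → Prop} :
    ∀ {s t : List A}, Lex r s t → s.length = t.length → ∀ w, Lex r (s ++ w) (t ++ w)
  | _, _, .nil, hlen, _ => by simp at hlen
  | _, _, .cons h, hlen, w => .cons (h.append_right_of_length_eq (by simpa using hlen) w)
  | _, _, .rel h, _, _ => .rel h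

variable [LinearOrder A] {w x y : List A}

theorem le_of_append_le_append_left (h : w ++ x ≤ w ++ y) : x ≤ y :=
  not_lt.1 fun hyx => h.not_gt (append_left_lt hyx)

theorem le_of_append_le_append_right (hlen : x.length = y.length) (h : x ++ w ≤ y ++ w) :
    x ≤ y :=
  not_lt.1 fun hyx => h.not_gt (hyx.append_right_of_length_eq hlen.symm w)

end List

section Border

variable {A : Type*} [LinearOrder A]

theorem eq_of_border_of_extremal {u w x y : List A} (hx : w ++ x = u) (hy : y ++ w = u)
    (hu : (∀ v, u ~r v → u ≤ v) ∨ (∀ v, u ~r v → v ≤ u)) : x = y := by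
  have hlen : x.length = y.length := by
    have := congrArg List.length (hx.trans hy.symm)
    simp only [List.length_append] at this
    omega
  have hxw : u ~r x ++ w := hx ▸ List.isRotated_append
  have hwy : u ~r w ++ y := hy ▸ List.isRotated_append
  rcases hu with hmin | hmax
  · exact le_antisymm (List.le_of_append_le_append_left (w := w) (hx ▸ hmin _ hwy))
      (List.le_of_append_le_append_right (w := w) hlen.symm (hy ▸ hmin _ hxw))
  · exact le_antisymm (List.le_of_append_le_append_right (w := w) hlen (hy ▸ hmax _ hxw))
      (List.le_of_append_le_append_left (w := w) (hx ▸ hmax _ hwy))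

end Border

/-- A prime word has no proper border: no nonempty word `w ≠ u` is both a
prefix and a suffix of `u`. -/
theorem prime_word_no_border {A : Type*} [LinearOrder A] (u w : List A)
    (hu : PrimeWord u) (hw : w ≠ []) (hwu : w ≠ u)
    (hpre : w <+: u) (hsuf : w <:+ u) : False := by
  obtain ⟨x, hx⟩ := hpre
  obtain ⟨y, hy⟩ := hsuf
  obtain rfl : x = y := eq_of_border_of_extremal hx hy hu.2
  obtain ⟨t, m, k, rfl, rfl⟩ := exists_eq_listPow_of_append_comm (hx.trans hy.symm)
  have hmk : m + k = 1 := hu.1.eq_one_of_eq_listPow (by rw [← hx, listPow_add])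
  obtain rfl | rfl : m = 0 ∨ k = 0 := by omega
  · exact hw rfl
  · exact hwu (by simpa [listPow] using hx)
end

section
/- If the lexicographically minimal and maximal cyclic rotations of a primitive word w coincide, then w has length 1. -/
lemma listPow_singleton {A : Type*} (a : A) (n : ℕ) :
    listPow [a] n = List.replicate n a := by
  induction n with
  | zero => rfl
  | succ n ih =>
    rw [listPow, List.replicate_succ, List.flatten_cons, ← listPow, ih, List.replicate_succ, List.singleton_append]

/-- If the lexicographically minimal and maximal cyclic rotations of a
primitive word `w` coincide, then `w` has length 1. -/
theorem min_eq_max_rotation_length_one {A : Type*} [LinearOrder A]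
    (w m M : List A) (hprim : Primitive w)
    (hmrot : m ~r w) (hmmin : ∀ v, v ~r w → m ≤ v)
    (hMrot : M ~r w) (hMmax : ∀ v, v ~r w → v ≤ M)
    (heq : m = M) : w.length = 1 := by
  have hne := hprim.1
  have hwne : w ≠ [] := hne
  have : Nonempty A := ⟨w.head hwne⟩
  have hall : ∀ v, v ~r w → v = m := fun v hv =>
    le_antisymm (heq ▸ hMmax v hv) (hmmin v hv)
  have hw : w = m := hall w (List.IsRotated.refl w)
  have hr : w.rotate 1 = w := by
    rw [hall (w.rotate 1) (List.IsRotated.symm ⟨1, rfl⟩), hw]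
  obtain ⟨a, ha⟩ := List.rotate_one_eq_self_iff_eq_replicate.mp hr
  have := hprim.2 [a] w.length (by rw [listPow_singleton]; exact ha)
  rw [this]; rfl
end

section
/- A word of length n contains at most (n-1)/2 highly periodic runs. -/
/-!
The argument of the runs theorem of Bannai et al. Fix a linear order on the alphabet and
orient every run `[i..j]` of period `p` by that order or by its reverse, so that the letter
after the run (if there is one) is smaller than the letter `p` positions before it. Mark the
positions `s > i` at which a Lyndon root of the run begins, i.e. a factor of length `p` that
is a Lyndon word for the run's orientation.

No position is marked by two different runs. Two runs of equal period that mark the same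
position coincide by maximality. If a run of period `p` has the same orientation as a run of
longer period `p'`, the Lyndon root of length `p'` at `s` would have to be smaller than its
suffix starting at `s + p`; but this suffix agrees with the root as long as the shorter run
lasts and then drops below it. Roots of opposite orientations at `s` have equal first letters,
so the shorter one is constant, hence a single letter; then the longer root ends with the
letter preceding `s`, which is its own first letter, impossible for a Lyndon word.

The least rotation of the root of a run is a Lyndon word because the root is primitive, so a
run of length at least `3p` has the two marked positions `s` and `s + p` for some
`i < s ≤ i + p`. All marked positions lie in `[1, n - 1]`.
-/

/-- The positions `i ≤ k ≤ j` (0-based) of `u` satisfy `u k = u (k + p)`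
whenever both sides stay inside `[i..j]`. -/
def HasPeriodOn {A : Type*} (u : ℕ → A) (i j p : ℕ) : Prop :=
  ∀ k, i ≤ k → k + p ≤ j → u k = u (k + p)

/-- `[i..j]` (0-based) is a run of the word `u[0..n-1]` with shortest period
`p`: `2p ≤ j - i + 1` and the periodicity extends neither left nor right. -/
def IsRunWith {A : Type*} (u : ℕ → A) (n i j p : ℕ) : Prop :=
  i ≤ j ∧ j < n ∧ 1 ≤ p ∧ HasPeriodOn u i j p ∧
    (∀ q, 1 ≤ q → q < p → ¬ HasPeriodOn u i j q) ∧
    2 * p ≤ j - i + 1 ∧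
    (i = 0 ∨ u (i - 1) ≠ u (i - 1 + p)) ∧
    (j + 1 = n ∨ u (j + 1 - p) ≠ u (j + 1))

/-- A highly periodic run: a run whose shortest period `p` satisfies
`3p ≤ j - i + 1`. -/
def IsHPRun {A : Type*} (u : ℕ → A) (n i j : ℕ) : Prop :=
  ∃ p, IsRunWith u n i j p ∧ 3 * p ≤ j - i + 1

namespace List

variable {α : Type*}

theorem append_lt_append_of_length_eq [LT α] {a b : List α} (c d : List α)
    (hl : a.length = b.length) (h : a < b) : a ++ c < b ++ d := by
  induction a generalizing b with
  | nil => cases b <;> simp_all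
  | cons x a ih =>
    cases b with
    | nil => simp at hl
    | cons y b =>
      rw [cons_append, cons_append, cons_lt_cons_iff] at *
      exact h.imp_right (And.imp_right (ih (by simpa using hl)))

theorem lt_of_append_lt_append_left [Preorder α] {l a b : List α} (h : l ++ a < l ++ b) :
    a < b := by
  induction l with
  | nil => exact h
  | cons x l ih => exact ih (cons_lt_cons_self.1 h)

def IsLyndon [LT α] (w : List α) : Prop :=
  ∀ k, 0 < k → k < w.length → w < w.drop k

variable [LinearOrder α] {w : List α}

theorem IsLyndon.getElem_zero_le (hw : w.IsLyndon) {k : ℕ} (hk : k < w.length) :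
    w[0] ≤ w[k] := by
  obtain _ | ⟨a, t⟩ := w
  · simp at hk
  obtain _ | k := k
  · exact le_rfl
  have h := hw (k + 1) k.succ_pos hk
  rw [drop_eq_getElem_cons hk] at h
  exact head_le_of_lt h

theorem IsLyndon.getElem_zero_lt_getElem_length_sub_one (hw : w.IsLyndon)
    (h : 2 ≤ w.length) : w[0] < w[w.length - 1] := by
  obtain _ | ⟨a, _ | ⟨b, t⟩⟩ := w
  · simp at h
  · simp at h
  simpa [drop_eq_getElem_cons, cons_lt_cons_iff] using hw (t.length + 1) (by omega) (by simp)

theorem IsLyndon.length_le_one_of_forall_le (hw : w.IsLyndon)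
    (h : ∀ k (hk : k < w.length), w[k] ≤ w[0]'(by omega)) : w.length ≤ 1 := by
  by_contra! hlen
  exact (h _ (by omega)).not_gt (hw.getElem_zero_lt_getElem_length_sub_one hlen)

theorem isLyndon_of_lt_rotate (hw : ∀ k, 0 < k → k < w.length → w < w.rotate k) :
    w.IsLyndon := by
  intro k hk0 hk
  have hrot : ∀ k ≤ w.length, w.rotate k = w.drop k ++ w.take k := fun _ hk =>
    rotate_eq_drop_append_take hk
  have hsplit : ∀ k, w.take k ++ w.drop k = w := fun k => take_append_drop k w
  set q := w.length - k
  rcases lt_trichotomy (w.drop k) (w.take q) with hlt | heq | hgt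
  · have : w.rotate k < w := calc
      w.rotate k = w.drop k ++ w.take k := hrot k hk.le
      _ < w.take q ++ w.drop q :=
        append_lt_append_of_length_eq _ _ (by simp only [length_drop, length_take]; omega) hlt
      _ = w := hsplit q
    exact absurd (hw k hk0 hk) (lt_asymm this)
  · have h : w.take q ++ w.drop q < w.take q ++ w.take k := by
      rw [hsplit, ← heq, ← hrot k hk.le]
      exact hw k hk0 hk
    have : w.rotate q < w := calc
      w.rotate q = w.drop q ++ w.take q := hrot q (by omega)
      _ < w.take k ++ w.drop k :=
        append_lt_append_of_length_eq _ _ (by simp only [length_drop, length_take]; omega)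
          (lt_of_append_lt_append_left h)
      _ = w := hsplit k
    exact absurd (hw q (by omega) (by omega)) (lt_asymm this)
  · calc w = w.take q ++ w.drop q := (hsplit q).symm
      _ < w.drop k ++ [] :=
        append_lt_append_of_length_eq _ _ (by simp only [length_take, length_drop]; omega) hgt
      _ = w.drop k := append_nil _

end List

section Words

open OrderDual

variable {α : Type*}

def factor (u : ℕ → α) (s m : ℕ) : List α :=
  (List.range m).map fun r => u (s + r)

variable {u : ℕ → α} {n i j p i' j' p' s m k : ℕ}

@[simp] theorem length_factor : (factor u s m).length = m := by simp [factor]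

@[simp] theorem getElem_factor {r : ℕ} (hr : r < (factor u s m).length) :
    (factor u s m)[r] = u (s + r) := by simp [factor]

theorem factor_add : factor u s (m + k) = factor u s m ++ factor u (s + m) k := by
  simp [factor, List.range_add, Function.comp_def, Nat.add_assoc]

theorem factor_succ : factor u s (m + 1) = u s :: factor u (s + 1) m := by
  simp [factor, List.range_succ_eq_map, Function.comp_def, Nat.add_assoc, Nat.add_comm 1]

theorem drop_factor : (factor u s m).drop k = factor u (s + k) (m - k) := by
  rcases le_total k m with h | h
  · obtain ⟨t, rfl⟩ := Nat.exists_eq_add_of_le h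
    rw [factor_add, List.drop_left' length_factor, Nat.add_sub_cancel_left]
  · rw [List.drop_eq_nil_of_le (by simpa using h), Nat.sub_eq_zero_of_le h]
    rfl

theorem HasPeriodOn.eq_add_mul (hper : HasPeriodOn u i j p) {a : ℕ} (ha : i ≤ a) :
    ∀ q, a + p * q ≤ j → u a = u (a + p * q)
  | 0, _ => rfl
  | q + 1, h => by
    rw [hper.eq_add_mul ha q (by nlinarith), hper (a + p * q) (by omega) (by nlinarith)]
    ring_nf

theorem HasPeriodOn.eq_of_modEq (hper : HasPeriodOn u i j p) {a b : ℕ} (ha : i ≤ a) (hb : i ≤ b)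
    (ha' : a ≤ j) (hb' : b ≤ j) (h : a ≡ b [MOD p]) : u a = u b := by
  wlog hab : a ≤ b generalizing a b
  · exact (this hb ha hb' ha' h.symm (by omega)).symm
  obtain ⟨q, hq⟩ := (Nat.modEq_iff_dvd' hab).1 h
  rw [hper.eq_add_mul ha q (by omega), ← hq, Nat.add_sub_cancel' hab]

theorem HasPeriodOn.factor_add_period (hper : HasPeriodOn u i j p) (hs : i ≤ s)
    (h : s + p + m ≤ j + 1) : factor u (s + p) m = factor u s m := by
  refine List.ext_getElem (by simp) fun r hr _ => ?_
  simp only [getElem_factor]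
  rw [hper (s + r) (by omega) (by simp only [length_factor] at hr; omega)]
  ring_nf

theorem HasPeriodOn.rotate_factor (hper : HasPeriodOn u i j p) (hs : i ≤ s) (hk : k ≤ p)
    (h : s + p + k ≤ j + 1) : (factor u s p).rotate k = factor u (s + k) p := by
  obtain ⟨t, rfl⟩ := Nat.exists_eq_add_of_le hk
  have hrot := List.rotate_append_length_eq (factor u s k) (factor u (s + k) t)
  rw [length_factor] at hrot
  rw [factor_add, hrot, Nat.add_comm k t, factor_add, Nat.add_assoc,
    hper.factor_add_period hs (by omega)]

theorem HasPeriodOn.of_factor_add_eq (hper : HasPeriodOn u i j p) (hp : 0 < p) (hs : i ≤ s)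
    (hsp : s ≤ i + p) (hk : s + p + k ≤ j + 1) (h : factor u (s + k) p = factor u s p) :
    HasPeriodOn u i j k := by
  intro x hx hxk
  set r := (x + p - s) % p
  have hr : r < p := Nat.mod_lt _ hp
  have hmod : s + r ≡ x [MOD p] := calc
    s + r ≡ s + (x + p - s) [MOD p] := (Nat.mod_modEq _ _).add_left s
    _ = x + p := by omega
    _ ≡ x [MOD p] := Nat.add_mod_right x p
  have hshift := List.getElem_of_eq h (i := r) (by simpa using hr)
  simp only [getElem_factor] at hshift
  calc u x = u (s + r) := hper.eq_of_modEq hx (by omega) (by omega) (by omega) hmod.symm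
    _ = u (s + r + k) := by rw [← hshift]; ring_nf
    _ = u (x + k) := hper.eq_of_modEq (by omega) (by omega) (by omega) hxk (hmod.add_right k)

theorem IsRunWith.hasPeriodOn (h : IsRunWith u n i j p) : HasPeriodOn u i j p := h.2.2.2.1

theorem IsRunWith.left_le (h : IsRunWith u n i j p) (h' : HasPeriodOn u i' j' p)
    (hp : i + p ≤ j' + 1) : i ≤ i' := by
  by_contra! hlt
  obtain ⟨-, -, -, -, -, -, hleft | hleft, -⟩ := h
  · omega
  · exact hleft (h' (i - 1) (by omega) (by omega))

theorem IsRunWith.le_right (h : IsRunWith u n i j p) (h' : HasPeriodOn u i' j' p) (hj' : j' < n)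
    (hp : i' + p ≤ j + 1) : j' ≤ j := by
  by_contra! hlt
  obtain ⟨-, -, -, -, -, -, -, hright | hright⟩ := h
  · omega
  · refine hright ?_
    rw [h' (j + 1 - p) (by omega) (by omega), Nat.sub_add_cancel (by omega)]

theorem IsRunWith.eq_of_period_eq (h : IsRunWith u n i j p) (h' : IsRunWith u n i' j' p)
    (hi : i + p ≤ j' + 1) (hi' : i' + p ≤ j + 1) : i = i' ∧ j = j' :=
  ⟨(h.left_le h'.hasPeriodOn hi).antisymm (h'.left_le h.hasPeriodOn hi'),
    (h'.le_right h.hasPeriodOn h.2.1 hi).antisymm (h.le_right h'.hasPeriodOn h'.2.1 hi')⟩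

variable [LinearOrder α]

theorem IsRunWith.exists_isLyndon_factor (h : IsRunWith u n i j p) (h3 : 3 * p ≤ j - i + 1) :
    ∃ s, i < s ∧ s ≤ i + p ∧ (factor u s p).IsLyndon := by
  obtain ⟨hij, -, hp, hper, hmin, -, -, -⟩ := h
  obtain ⟨k, hk, hkmin⟩ :=
    (Finset.range p).exists_min_image (factor u (i + 1) p).rotate ⟨0, Finset.mem_range.2 hp⟩
  rw [Finset.mem_range] at hk
  have hroot := hper.rotate_factor (s := i + 1) (by omega) hk.le (by omega)
  refine ⟨i + 1 + k, by omega, by omega, List.isLyndon_of_lt_rotate fun k' hk'0 hk' => ?_⟩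
  rw [length_factor] at hk'
  refine lt_of_le_of_ne ?_ fun heq => hmin k' hk'0 hk' ?_
  · rw [← hroot, List.rotate_rotate, ← List.rotate_mod _ (k + k'), length_factor]
    exact hkmin _ (Finset.mem_range.2 (Nat.mod_lt _ (by omega)))
  · rw [hper.rotate_factor (by omega) hk'.le (by omega)] at heq
    exact hper.of_factor_add_eq (by omega) (by omega) (by omega) (by omega) heq.symm

def IsLyndonRootStart (u : ℕ → α) (n i j p s : ℕ) : Prop :=
  i < s ∧ s + p ≤ j + 1 ∧ (factor u s p).IsLyndon ∧ (j + 1 = n ∨ u (j + 1) < u (j + 1 - p))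

theorem IsRunWith.exists_isLyndonRootStart (h : IsRunWith u n i j p) (h3 : 3 * p ≤ j - i + 1)
    (hend : j + 1 = n ∨ u (j + 1) < u (j + 1 - p)) :
    ∃ s, IsLyndonRootStart u n i j p s ∧ IsLyndonRootStart u n i j p (s + p) := by
  obtain ⟨s, hs, hsp, hw⟩ := h.exists_isLyndon_factor h3
  have hij := h.1
  refine ⟨s, ⟨hs, by omega, hw, hend⟩, ⟨by omega, by omega, ?_, hend⟩⟩
  rwa [h.hasPeriodOn.factor_add_period (by omega) (by omega)]

theorem HasPeriodOn.not_isLyndon_factor (hper : HasPeriodOn u i j p) (hp : 0 < p)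
    (hend : j + 1 = n ∨ u (j + 1) < u (j + 1 - p)) (hs : i ≤ s) (hsj : s + p ≤ j + 1)
    (hpm : p < m) (hmn : s + m ≤ n) : ¬ (factor u s m).IsLyndon := by
  intro hw
  have hlt := hw p hp (by simpa using hpm)
  rw [drop_factor] at hlt
  refine List.not_lt.2 ?_ hlt
  by_cases hin : s + m ≤ j + 1
  · obtain ⟨t, rfl⟩ := Nat.exists_eq_add_of_le hpm.le
    rw [hper.factor_add_period hs (by omega), Nat.add_sub_cancel_left, Nat.add_comm, factor_add]
    exact List.IsPrefix.le (List.prefix_append _ _)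
  rcases hend with hend | hend
  · omega
  set L := j + 1 - p - s
  obtain ⟨t, ht⟩ : ∃ t, m - p = L + (t + 1) := ⟨m - p - L - 1, by omega⟩
  rw [ht, show m = L + (p + t + 1) by omega, factor_add (m := L), factor_add (m := L),
    factor_succ, factor_succ, hper.factor_add_period hs (by omega),
    show s + p + L = j + 1 by omega, show s + L = j + 1 - p by omega]
  exact List.le_of_lt (List.append_left_lt (List.cons_lt_cons_iff.2 (Or.inl hend)))

theorem HasPeriodOn.not_isLyndon_factor_of_period_one (h₁ : HasPeriodOn u i j 1)
    (hper : HasPeriodOn u i' j' p) (hs : i < s) (hsj : s ≤ j) (hs' : i' < s)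
    (hsp : s + p ≤ j' + 1) (hp : 2 ≤ p) : ¬ (factor u s p).IsLyndon := by
  intro hw
  have hlt := hw.getElem_zero_lt_getElem_length_sub_one (by simpa using hp)
  simp only [getElem_factor, length_factor, Nat.add_zero] at hlt
  have hprev : u (s - 1) = u s := by
    rw [h₁ (s - 1) (by omega) (by omega), Nat.sub_add_cancel (by omega)]
  have hlast : u (s - 1) = u (s + (p - 1)) := by
    rw [hper (s - 1) (by omega) (by omega)]; congr 1; omega
  exact hlt.ne (hprev.symm.trans hlast)

theorem IsLyndonRootStart.eq (h : IsRunWith u n i j p) (h' : IsRunWith u n i' j' p')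
    (hs : IsLyndonRootStart u n i j p s) (hs' : IsLyndonRootStart u n i' j' p' s) :
    i = i' ∧ j = j' := by
  wlog hpp : p ≤ p' generalizing i j p i' j' p'
  · exact (this h' h hs' hs (by omega)).imp Eq.symm Eq.symm
  have ⟨_, _, hp, _, _, _, _, _⟩ := h
  have ⟨_, hj'n, _, _, _, _, _, _⟩ := h'
  obtain ⟨hi, hsj, -, hend⟩ := hs
  obtain ⟨hi', hsj', hw', -⟩ := hs'
  rcases hpp.eq_or_lt with rfl | hlt
  · exact h.eq_of_period_eq h' (by omega) (by omega)
  · exact absurd hw' (h.hasPeriodOn.not_isLyndon_factor hp hend hi.le hsj hlt (by omega))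

theorem IsLyndonRootStart.eq_of_toDual (h : IsRunWith u n i j p) (h' : IsRunWith u n i' j' p')
    (hs : IsLyndonRootStart u n i j p s) (hs' : IsLyndonRootStart (toDual ∘ u) n i' j' p' s) :
    i = i' ∧ j = j' := by
  have ⟨_, _, hp, _, _, _, _, _⟩ := h
  have ⟨_, _, hp', _, _, _, _, _⟩ := h'
  obtain ⟨hi, hsj, hw, -⟩ := hs
  obtain ⟨hi', hsj', hw', -⟩ := hs'
  rcases lt_trichotomy p p' with hlt | rfl | hlt
  · have hp1 : p = 1 := by
      have hlen := hw.length_le_one_of_forall_le fun k hk => by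
        have hle := hw'.getElem_zero_le (k := k) (by simp only [length_factor] at hk ⊢; omega)
        simpa only [getElem_factor, Nat.add_zero, Function.comp_apply, toDual_le_toDual] using hle
      simp only [length_factor] at hlen; omega
    subst hp1
    exact absurd hw' (HasPeriodOn.not_isLyndon_factor_of_period_one (u := toDual ∘ u)
      h.hasPeriodOn h'.hasPeriodOn hi (by omega) hi' hsj' (by omega))
  · exact h.eq_of_period_eq h' (by omega) (by omega)
  · have hp1 : p' = 1 := by
      have hlen := hw'.length_le_one_of_forall_le fun k hk => by
        have hle := hw.getElem_zero_le (k := k) (by simp only [length_factor] at hk ⊢; omega)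
        simpa only [getElem_factor, Nat.add_zero, Function.comp_apply, toDual_le_toDual] using hle
      simp only [length_factor] at hlen; omega
    subst hp1
    exact absurd hw (h'.hasPeriodOn.not_isLyndon_factor_of_period_one h.hasPeriodOn hi'
      (by omega) hi hsj (by omega))

def IsRunRootStart (u : ℕ → α) (n i j s : ℕ) : Prop :=
  ∃ p, IsRunWith u n i j p ∧
    (IsLyndonRootStart u n i j p s ∨ IsLyndonRootStart (toDual ∘ u) n i j p s)

theorem IsRunRootStart.eq (hs : IsRunRootStart u n i j s) (hs' : IsRunRootStart u n i' j' s) :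
    i = i' ∧ j = j' := by
  obtain ⟨p, h, hs | hs⟩ := hs <;> obtain ⟨p', h', hs' | hs'⟩ := hs'
  · exact IsLyndonRootStart.eq h h' hs hs'
  · exact IsLyndonRootStart.eq_of_toDual h h' hs hs'
  · exact (IsLyndonRootStart.eq_of_toDual h' h hs' hs).imp Eq.symm Eq.symm
  · exact IsLyndonRootStart.eq (u := toDual ∘ u) h h' hs hs'

theorem IsRunRootStart.mem_Icc (hs : IsRunRootStart u n i j s) : s ∈ Set.Icc 1 (n - 1) := by
  obtain ⟨p, ⟨-, hjn, hp, -⟩, ⟨hi, hsj, -⟩ | ⟨hi, hsj, -⟩⟩ := hs <;>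
    exact ⟨by omega, by omega⟩

theorem IsHPRun.exists_two_isRunRootStart (h : IsHPRun u n i j) :
    ∃ s₁ s₂, s₁ ≠ s₂ ∧ IsRunRootStart u n i j s₁ ∧ IsRunRootStart u n i j s₂ := by
  obtain ⟨p, hrun, h3⟩ := h
  have ⟨_, _, hp, _, _, _, _, hright⟩ := hrun
  rcases hright with hend | hne
  · obtain ⟨s, h₁, h₂⟩ := hrun.exists_isLyndonRootStart h3 (.inl hend)
    exact ⟨s, s + p, by omega, ⟨p, hrun, .inl h₁⟩, ⟨p, hrun, .inl h₂⟩⟩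
  rcases hne.lt_or_gt with hlt | hlt
  · obtain ⟨s, h₁, h₂⟩ :=
      IsRunWith.exists_isLyndonRootStart (u := toDual ∘ u) hrun h3 (.inr hlt)
    exact ⟨s, s + p, by omega, ⟨p, hrun, .inr h₁⟩, ⟨p, hrun, .inr h₂⟩⟩
  · obtain ⟨s, h₁, h₂⟩ := hrun.exists_isLyndonRootStart h3 (.inr hlt)
    exact ⟨s, s + p, by omega, ⟨p, hrun, .inl h₁⟩, ⟨p, hrun, .inl h₂⟩⟩

end Words

theorem Set.two_mul_ncard_le_ncard_of_exists_pair {ι β : Type*} {S : Set ι} {T : Set β}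
    (hT : T.Finite) (P : ι → β → Prop) (hP : ∀ x ∈ S, ∃ b₁ b₂, b₁ ≠ b₂ ∧ P x b₁ ∧ P x b₂)
    (hPT : ∀ x ∈ S, ∀ b, P x b → b ∈ T) (huniq : ∀ x ∈ S, ∀ y ∈ S, ∀ b, P x b → P y b → x = y) :
    2 * S.ncard ≤ T.ncard := by
  rcases S.eq_empty_or_nonempty with rfl | ⟨x₀, hx₀⟩
  · simp
  have : Nonempty β := ⟨(hP x₀ hx₀).choose⟩
  choose! f g hfg hf hg using hP
  let F : ι × Bool → β := fun x => bif x.2 then g x.1 else f x.1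
  have hF : ∀ x ∈ S ×ˢ (univ : Set Bool), P x.1 (F x) := by
    rintro ⟨x, _ | _⟩ ⟨hx, -⟩
    exacts [hf x hx, hg x hx]
  calc 2 * S.ncard = (S ×ˢ (univ : Set Bool)).ncard := by
        rw [ncard_prod, ncard_univ, Nat.card_eq_fintype_card, Fintype.card_bool, mul_comm]
    _ ≤ T.ncard := by
      refine ncard_le_ncard_of_injOn F (fun x hx => hPT _ hx.1 _ (hF x hx)) ?_ hT
      rintro ⟨x, b⟩ hx ⟨y, c⟩ hy hxy
      obtain rfl := huniq x hx.1 y hy.1 _ (hF _ hx) (hxy ▸ hF _ hy)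
      cases b <;> cases c
      exacts [rfl, absurd hxy (hfg x hx.1), absurd hxy.symm (hfg x hx.1), rfl]

/-- A word of length `n` contains at most `(n-1)/2` highly periodic runs. -/
theorem hp_runs_upper_bound {A : Type*} (u : ℕ → A) (n : ℕ) :
    {q : ℕ × ℕ | IsHPRun u n q.1 q.2}.ncard ≤ (n - 1) / 2 := by
  classical
  let : LinearOrder A := linearOrderOfSTO WellOrderingRel
  have h := Set.two_mul_ncard_le_ncard_of_exists_pair (S := {q : ℕ × ℕ | IsHPRun u n q.1 q.2})
    (Set.finite_Icc 1 (n - 1)) (fun q s => IsRunRootStart u n q.1 q.2 s)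
    (fun _ hq => IsHPRun.exists_two_isRunRootStart hq) (fun _ _ _ hs => hs.mem_Icc)
    fun _ _ _ _ _ hs hs' => Prod.ext_iff.2 (hs.eq hs')
  rw [Set.ncard_Icc_nat] at h
  omega
end

section
/- Let s be a word with r hp-runs and length ℓ. Define s_0 = s and s_{n+1} = (s_n \overline{s_n})^3, where \overline{s_n} is s_n rewritten over a disjoint copy of its alphabet. Then |s_n| = 6^n ℓ and the number of hp-runs in s_n is 6^n r + (6^n - 1)/5, so the hp-run density of s_n tends to r/ℓ + 1/(5ℓ) as n → ∞. -/
/-!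
A relettering changes no hp-run, and in `(w w̄)³` two equal letters always lie in blocks of
length `|w|` of the same parity. So a period of an hp-run that crosses a block boundary
preserves block parities, which forces it to be a multiple of `2|w|`; as the run is at least
three periods long, it is the whole word. Every other hp-run lies inside one block, and since
the letters next to a block occur nowhere in it, these are exactly the six copies of the hp-runs
of `w`. Hence `hp-runs((w w̄)³) = 6 · hp-runs(w) + 1`, and the closed formula and the limit of
the densities follow by induction.
-/

def HasPeriodOnL {A : Type*} (v : List A) (i j p : ℕ) : Prop :=
  ∀ k, i ≤ k → k + p ≤ j → v[k]? = v[k + p]?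

def IsRunWithL {A : Type*} (v : List A) (i j p : ℕ) : Prop :=
  i ≤ j ∧ j < v.length ∧ 1 ≤ p ∧ HasPeriodOnL v i j p ∧
    (∀ q, 1 ≤ q → q < p → ¬ HasPeriodOnL v i j q) ∧
    2 * p ≤ j - i + 1 ∧
    (i = 0 ∨ v[i - 1]? ≠ v[i - 1 + p]?) ∧
    (j + 1 = v.length ∨ v[j + 1 - p]? ≠ v[j + 1]?)

def IsHPRunL {A : Type*} (v : List A) (i j : ℕ) : Prop :=
  ∃ p, IsRunWithL v i j p ∧ 3 * p ≤ j - i + 1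

/-- The number of highly periodic runs in the word `v`. -/
noncomputable def hpRunCount {A : Type*} (v : List A) : ℕ :=
  {q : ℕ × ℕ | IsHPRunL v q.1 q.2}.ncard

/-- The copy `\overline{w}` of `w` over a disjoint alphabet copy, at stage `n`
(second coordinates of letters of stage-`n` words lie in `[0, 2^n)`, so
shifting them by `2^n` yields an injective relettering into a disjoint
alphabet). -/
def barCopy {A : Type*} (n : ℕ) (w : List (A × ℕ)) : List (A × ℕ) :=
  w.map fun a => (a.1, a.2 + 2 ^ n)

/-- The sequence `s₀ = s`, `s_{n+1} = (s_n \overline{s_n})^3`. -/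
def seqWord {A : Type*} (s : List A) : ℕ → List (A × ℕ)
  | 0 => s.map fun a => (a, 0)
  | n + 1 =>
      (seqWord s n ++ barCopy n (seqWord s n)) ++
      (seqWord s n ++ barCopy n (seqWord s n)) ++
      (seqWord s n ++ barCopy n (seqWord s n))

open Function

section Window
variable {α β : Type*} {v : List β} {w : List α} {f : α → β} {a : ℕ}

lemma hasPeriodOnL_window_iff (hf : Injective f)
    (hwin : ∀ r < w.length, v[a + r]? = (w[r]?).map f) {i j q : ℕ} (hj : j < w.length) :
    HasPeriodOnL v (a + i) (a + j) q ↔ HasPeriodOnL w i j q := by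
  constructor
  · intro h k hik hkj
    have hk := h (a + k) (by omega) (by omega)
    rw [add_assoc, hwin k (by omega), hwin (k + q) (by omega)] at hk
    exact Option.map_injective hf hk
  · intro h k hik hkj
    obtain ⟨k, rfl⟩ := Nat.exists_eq_add_of_le (le_trans (Nat.le_add_right a i) hik)
    rw [add_assoc, hwin k (by omega), hwin (k + q) (by omega), h k (by omega) (by omega)]

lemma isRunWithL_window_iff (hf : Injective f)
    (hwin : ∀ r < w.length, v[a + r]? = (w[r]?).map f)
    (hleft : 0 < a → ∀ r < w.length, v[a - 1]? ≠ v[a + r]?)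
    (hright : ∀ r < w.length, v[a + w.length]? ≠ v[a + r]?) {i j p : ℕ} (hj : j < w.length) :
    IsRunWithL v (a + i) (a + j) p ↔ IsRunWithL w i j p := by
  have hext : ∀ r₁ < w.length, ∀ r₂ < w.length, v[a + r₁]? = v[a + r₂]? ↔ w[r₁]? = w[r₂]? :=
    fun r₁ h₁ r₂ h₂ => by rw [hwin r₁ h₁, hwin r₂ h₂]; exact (Option.map_injective hf).eq_iff
  have hlen : ∀ r < w.length, a + r < v.length := fun r hr => by
    by_contra h
    simpa [List.getElem?_eq_none (not_lt.mp h), hr] using hwin r hr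
  unfold IsRunWithL
  by_cases hp : 1 ≤ p ∧ 2 * p ≤ j - i + 1
  swap
  · constructor <;> (intro h; omega)
  have hl : (a + i = 0 ∨ v[a + i - 1]? ≠ v[a + i - 1 + p]?) ↔
      (i = 0 ∨ w[i - 1]? ≠ w[i - 1 + p]?) := by
    rcases Nat.eq_zero_or_pos i with rfl | hi
    · refine iff_of_true ?_ (Or.inl rfl)
      rcases Nat.eq_zero_or_pos a with ha | ha
      · exact Or.inl (by omega)
      · rw [show a + 0 - 1 + p = a + (p - 1) by omega]
        exact Or.inr (hleft ha (p - 1) (by omega))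
    · rw [show a + i - 1 = a + (i - 1) by omega, add_assoc, ne_eq,
        hext (i - 1) (by omega) (i - 1 + p) (by omega)]
      exact or_congr (iff_of_false (by omega) (by omega)) Iff.rfl
  have hr : (a + j + 1 = v.length ∨ v[a + j + 1 - p]? ≠ v[a + j + 1]?) ↔
      (j + 1 = w.length ∨ w[j + 1 - p]? ≠ w[j + 1]?) := by
    rcases Nat.lt_or_ge (j + 1) w.length with hj' | hj'
    · rw [show a + j + 1 - p = a + (j + 1 - p) by omega, add_assoc, ne_eq,
        hext (j + 1 - p) (by omega) (j + 1) hj']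
      exact or_congr (iff_of_false (by have := hlen _ hj'; omega) (by omega)) Iff.rfl
    · refine iff_of_true (Or.inr ?_) (Or.inl (by omega))
      rw [show a + j + 1 - p = a + (w.length - p) by omega,
        show a + j + 1 = a + w.length by omega]
      exact (hright _ (by omega)).symm
  simp only [hasPeriodOnL_window_iff hf hwin hj, hl, hr, Nat.add_sub_add_left]
  constructor <;> rintro ⟨-, -, h⟩ <;> exact ⟨by omega, by have := hlen j hj; omega, h⟩

lemma isHPRunL_window_iff (hf : Injective f)
    (hwin : ∀ r < w.length, v[a + r]? = (w[r]?).map f)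
    (hleft : 0 < a → ∀ r < w.length, v[a - 1]? ≠ v[a + r]?)
    (hright : ∀ r < w.length, v[a + w.length]? ≠ v[a + r]?) {i j : ℕ} (hj : j < w.length) :
    IsHPRunL v (a + i) (a + j) ↔ IsHPRunL w i j := by
  simp only [IsHPRunL, isRunWithL_window_iff hf hwin hleft hright hj, Nat.add_sub_add_left]

end Window

section HPRunSet
variable {α β : Type*}

lemma IsHPRunL.le_and_lt_length {v : List α} {i j : ℕ} (h : IsHPRunL v i j) :
    i ≤ j ∧ j < v.length :=
  let ⟨_, ⟨hij, hj, _⟩, _⟩ := h; ⟨hij, hj⟩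

lemma finite_setOf_isHPRunL (v : List α) : {q : ℕ × ℕ | IsHPRunL v q.1 q.2}.Finite :=
  ((Set.finite_Iio v.length).prod (Set.finite_Iio v.length)).subset fun _ hq =>
    have h := IsHPRunL.le_and_lt_length hq
    ⟨h.1.trans_lt h.2, h.2⟩

lemma hpRunCount_map {f : α → β} (hf : Injective f) (w : List α) :
    hpRunCount (w.map f) = hpRunCount w := by
  have hrun : ∀ {i j}, j < w.length → (IsHPRunL (w.map f) i j ↔ IsHPRunL w i j) := fun hj => by
    simpa using isHPRunL_window_iff (a := 0) hf (fun r _ => by simp) (by simp)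
      (fun r hr => by simp [hr]) hj
  unfold hpRunCount
  congr 1
  ext ⟨i, j⟩
  by_cases hj : j < w.length
  · exact hrun hj
  · exact iff_of_false (fun h => hj (by simpa using h.le_and_lt_length.2))
      (fun h => hj h.le_and_lt_length.2)

end HPRunSet

section Parity
variable {L : ℕ}

lemma div_mod_two_ne_succ_div_mod_two_iff (t : ℕ) :
    t / L % 2 ≠ (t + 1) / L % 2 ↔ L ∣ t + 1 := by
  rw [Nat.succ_div]
  split_ifs with h <;> simp only [h, iff_true, iff_false, not_not] <;> omega

lemma two_mul_dvd_of_periodic_div_mod_two (hL : 0 < L) {i j p b : ℕ} (hp : 1 ≤ p)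
    (hlen : 3 * p ≤ j - i + 1)
    (hper : ∀ k, i ≤ k → k + p ≤ j → k / L % 2 = (k + p) / L % 2)
    (hb : L ∣ b) (hib : i < b) (hbj : b ≤ j) : 2 * L ∣ p := by
  have hshift : ∀ k, i ≤ k → k + 1 + p ≤ j → (L ∣ k + 1 ↔ L ∣ k + p + 1) := fun k hk hkj => by
    rw [← div_mod_two_ne_succ_div_mod_two_iff, ← div_mod_two_ne_succ_div_mod_two_iff,
      hper k hk (by omega), hper (k + 1) (by omega) hkj, add_right_comm]
  have hLp : L ∣ p := by
    obtain ⟨c, rfl⟩ : ∃ c, b = c + 1 := ⟨b - 1, by omega⟩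
    by_cases hbp : c + 1 + p ≤ j
    · have h := (hshift c (by omega) hbp).mp hb
      rwa [add_right_comm, Nat.dvd_add_right hb] at h
    · -- the boundary `c + 1` lies in the last third, so `c + 1 - p` is a boundary too
      have h := (hshift (c - p) (by omega) (by omega)).mpr (by rwa [show c - p + p = c by omega])
      rw [show c - p + 1 = c + 1 - p by omega] at h
      simpa [Nat.sub_sub_self (show p ≤ c + 1 by omega)] using Nat.dvd_sub hb h
  obtain ⟨q, rfl⟩ := hLp
  have h := hper i le_rfl (by omega)
  rw [Nat.add_mul_div_left _ _ hL] at h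
  rw [mul_comm L q]
  exact Nat.mul_dvd_mul_right (by omega) L

end Parity

def barCube {α : Type*} (g : α → α) (w : List α) : List α :=
  (w ++ w.map g) ++ (w ++ w.map g) ++ (w ++ w.map g)

section BarCube
variable {α : Type*} {g : α → α} {w : List α}

lemma getElem?_append_append_self (u : List α) {t : ℕ} (ht : t < 3 * u.length) :
    (u ++ u ++ u)[t]? = u[t % u.length]? := by
  rcases Nat.lt_or_ge t u.length with h₁ | h₁
  · rw [List.getElem?_append_left (by simp; omega), List.getElem?_append_left h₁,
      Nat.mod_eq_of_lt h₁]
  rcases Nat.lt_or_ge t (2 * u.length) with h₂ | h₂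
  · rw [List.getElem?_append_left (by simp; omega), List.getElem?_append_right h₁,
      Nat.mod_eq_sub_mod h₁, Nat.mod_eq_of_lt (by omega)]
  · rw [List.getElem?_append_right (by simp; omega), Nat.mod_eq_sub_mod h₁,
      Nat.mod_eq_sub_mod (by omega), Nat.mod_eq_of_lt (by omega)]
    simp only [List.length_append]
    congr 1
    omega

lemma getElem?_append_map_self {t : ℕ} (ht : t < 2 * w.length) :
    (w ++ w.map g)[t]? = (w[t % w.length]?).map g^[t / w.length] := by
  rcases Nat.lt_or_ge t w.length with h | h
  · simp [List.getElem?_append_left h, Nat.mod_eq_of_lt h, Nat.div_eq_of_lt h]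
  · have hmod : t % w.length = t - w.length := by
      rw [Nat.mod_eq_sub_mod h, Nat.mod_eq_of_lt (by omega)]
    have hdiv : t / w.length = 1 := Nat.div_eq_of_lt_le (by omega) (by omega)
    simp [List.getElem?_append_right h, hmod, hdiv]

lemma length_barCube : (barCube g w).length = 6 * w.length := by
  simp only [barCube, List.length_append, List.length_map]
  ring

lemma getElem?_barCube {t : ℕ} (ht : t < 6 * w.length) :
    (barCube g w)[t]? = (w[t % w.length]?).map g^[t / w.length % 2] := by
  have hu : (w ++ w.map g).length = w.length * 2 := by simp; ring
  rw [barCube, getElem?_append_append_self _ (by omega), hu,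
    getElem?_append_map_self (Nat.mod_lt _ (by omega) |>.trans_eq (by ring)),
    Nat.mod_mul_right_mod, Nat.mod_mul_right_div_self]

lemma getElem?_barCube_block {m r : ℕ} (hm : m < 6) (hr : r < w.length) :
    (barCube g w)[m * w.length + r]? = (w[r]?).map g^[m % 2] := by
  have hL : 0 < w.length := by omega
  rw [getElem?_barCube (by nlinarith), Nat.mul_add_mod_self_right, Nat.mod_eq_of_lt hr,
    add_comm, Nat.add_mul_div_right _ _ hL, Nat.div_eq_of_lt hr, zero_add]

lemma div_mod_two_eq_of_getElem?_barCube_eq (hdisj : ∀ a ∈ w, ∀ b ∈ w, a ≠ g b) {t₁ t₂ : ℕ}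
    (h₁ : t₁ < 6 * w.length) (h₂ : t₂ < 6 * w.length)
    (heq : (barCube g w)[t₁]? = (barCube g w)[t₂]?) :
    t₁ / w.length % 2 = t₂ / w.length % 2 := by
  have hL : 0 < w.length := by omega
  rw [getElem?_barCube h₁, getElem?_barCube h₂,
    List.getElem?_eq_getElem (Nat.mod_lt _ hL), List.getElem?_eq_getElem (Nat.mod_lt _ hL),
    Option.map_some, Option.map_some, Option.some_inj] at heq
  have hmem₁ := List.getElem_mem (Nat.mod_lt t₁ hL)
  have hmem₂ := List.getElem_mem (Nat.mod_lt t₂ hL)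
  have he₁ := Nat.mod_lt (t₁ / w.length) two_pos
  have he₂ := Nat.mod_lt (t₂ / w.length) two_pos
  interval_cases t₁ / w.length % 2 <;> interval_cases t₂ / w.length % 2
  · rfl
  · exact absurd heq (hdisj _ hmem₁ _ hmem₂)
  · exact absurd heq.symm (hdisj _ hmem₂ _ hmem₁)
  · rfl

lemma isHPRunL_barCube_block_iff (hg : Injective g) (hdisj : ∀ a ∈ w, ∀ b ∈ w, a ≠ g b)
    {m i j : ℕ} (hm : m < 6) (hj : j < w.length) :
    IsHPRunL (barCube g w) (m * w.length + i) (m * w.length + j) ↔ IsHPRunL w i j := by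
  have hL : 0 < w.length := by omega
  have hmL : m * w.length ≤ 5 * w.length := Nat.mul_le_mul_right _ (by omega)
  have hblock : ∀ r < w.length, (m * w.length + r) / w.length = m := fun r hr => by
    rw [add_comm, Nat.add_mul_div_right _ _ hL, Nat.div_eq_of_lt hr, zero_add]
  have hne : ∀ t, t < 6 * w.length → t / w.length % 2 ≠ m % 2 →
      ∀ r < w.length, (barCube g w)[t]? ≠ (barCube g w)[m * w.length + r]? :=
    fun t ht hpar r hr heq => hpar <| by
      rw [div_mod_two_eq_of_getElem?_barCube_eq hdisj ht (by omega) heq, hblock r hr]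
  refine isHPRunL_window_iff (hg.iterate _) (fun r hr => getElem?_barCube_block hm hr)
    (fun hpos => hne _ (by omega) ?_) ?_ hj
  · have h := div_mod_two_ne_succ_div_mod_two_iff (L := w.length) (m * w.length - 1)
    rw [Nat.sub_add_cancel hpos, Nat.mul_div_cancel _ hL] at h
    exact h.mpr (Dvd.intro_left m rfl)
  · intro r hr
    rcases Nat.lt_or_ge m 5 with hm5 | hm5
    · have hmL' : m * w.length + w.length ≤ 5 * w.length := by
        rw [← add_one_mul]; exact Nat.mul_le_mul_right _ hm5
      refine hne _ (by omega) ?_ r hr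
      rw [← add_one_mul, Nat.mul_div_cancel _ hL]
      omega
    · have h5 : 5 * w.length ≤ m * w.length := Nat.mul_le_mul_right _ hm5
      rw [List.getElem?_eq_none (by rw [length_barCube]; omega),
        getElem?_barCube_block hm hr, List.getElem?_eq_getElem hr]
      simp

lemma two_mul_length_dvd_of_hasPeriodOnL_barCube (hdisj : ∀ a ∈ w, ∀ b ∈ w, a ≠ g b)
    {i j p b : ℕ} (hj : j < 6 * w.length) (hper : HasPeriodOnL (barCube g w) i j p)
    (hp : 1 ≤ p) (hlen : 3 * p ≤ j - i + 1) (hb : w.length ∣ b) (hib : i < b) (hbj : b ≤ j) :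
    2 * w.length ∣ p :=
  two_mul_dvd_of_periodic_div_mod_two (by omega) hp hlen
    (fun k hk hkp => div_mod_two_eq_of_getElem?_barCube_eq hdisj (by omega) (by omega)
      (hper k hk hkp)) hb hib hbj

lemma isHPRunL_barCube_whole (hdisj : ∀ a ∈ w, ∀ b ∈ w, a ≠ g b) (hL : 0 < w.length) :
    IsHPRunL (barCube g w) 0 (6 * w.length - 1) := by
  have hlen := length_barCube (g := g) (w := w)
  refine ⟨2 * w.length, ⟨by omega, by omega, by omega, ?_, ?_, by omega, Or.inl rfl,
    Or.inl (by omega)⟩, by omega⟩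
  · intro k _ hk
    rw [getElem?_barCube (by omega), getElem?_barCube (by omega), mul_comm,
      Nat.add_mul_mod_self_left, Nat.add_mul_div_left _ _ hL, Nat.add_mod_right]
  · intro q hq hq2 hper
    have := Nat.le_of_dvd (by omega) (two_mul_length_dvd_of_hasPeriodOnL_barCube hdisj
      (by omega) hper hq (by omega) (dvd_refl _) hL (by omega))
    omega

lemma isHPRunL_barCube_iff (hg : Injective g) (hdisj : ∀ a ∈ w, ∀ b ∈ w, a ≠ g b)
    (hL : 0 < w.length) {i j : ℕ} :
    IsHPRunL (barCube g w) i j ↔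
      (∃ m < 6, ∃ i' j', IsHPRunL w i' j' ∧ i = m * w.length + i' ∧ j = m * w.length + j') ∨
        (i = 0 ∧ j = 6 * w.length - 1) := by
  constructor
  · intro h
    have hij : i ≤ j := h.le_and_lt_length.1
    have hj : j < 6 * w.length := length_barCube (g := g) ▸ h.le_and_lt_length.2
    by_cases hcross : ∃ b, w.length ∣ b ∧ i < b ∧ b ≤ j
    · obtain ⟨b, hb, hib, hbj⟩ := hcross
      obtain ⟨p, ⟨-, -, hp, hper, -⟩, hlen⟩ := h
      have := Nat.le_of_dvd (by omega)
        (two_mul_length_dvd_of_hasPeriodOnL_barCube hdisj hj hper hp hlen hb hib hbj)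
      exact Or.inr (by omega)
    · push Not at hcross
      set m := i / w.length
      have hi : m * w.length + i % w.length = i := Nat.div_add_mod' i w.length
      have hr : i % w.length < w.length := Nat.mod_lt i hL
      have hjm : j < m * w.length + w.length := by
        by_contra hge
        have := hcross ((m + 1) * w.length) (Dvd.intro_left _ rfl) (by rw [add_one_mul]; omega)
        rw [add_one_mul] at this
        omega
      have hm : m < 6 := Nat.div_lt_of_lt_mul (by omega)
      refine Or.inl ⟨m, hm, i % w.length, j - m * w.length, ?_, hi.symm, by omega⟩
      rw [← isHPRunL_barCube_block_iff hg hdisj hm (by omega), hi,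
        Nat.add_sub_cancel' (by omega)]
      exact h
  · rintro (⟨m, hm, i', j', hrun, rfl, rfl⟩ | ⟨rfl, rfl⟩)
    · exact (isHPRunL_barCube_block_iff hg hdisj hm hrun.le_and_lt_length.2).mpr hrun
    · exact isHPRunL_barCube_whole hdisj hL

theorem hpRunCount_barCube (hg : Injective g) (hdisj : ∀ a ∈ w, ∀ b ∈ w, a ≠ g b)
    (hL : 0 < w.length) : hpRunCount (barCube g w) = 6 * hpRunCount w + 1 := by
  set S := {q : ℕ × ℕ | IsHPRunL w q.1 q.2}
  set shift : ℕ × (ℕ × ℕ) → ℕ × ℕ := fun x => (x.1 * w.length + x.2.1, x.1 * w.length + x.2.2)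
  have hset : {q : ℕ × ℕ | IsHPRunL (barCube g w) q.1 q.2} =
      shift '' (Set.Iio 6 ×ˢ S) ∪ {(0, 6 * w.length - 1)} := by
    ext ⟨i, j⟩
    simp only [Set.mem_ofPred_eq, isHPRunL_barCube_iff hg hdisj hL, Set.mem_union, Set.mem_image,
      Set.mem_prod, Set.mem_Iio, Set.mem_singleton_iff, Prod.exists, Prod.mk.injEq, shift, S]
    aesop
  have hinj : Set.InjOn shift (Set.Iio 6 ×ˢ S) := by
    rintro ⟨m₁, i₁, j₁⟩ ⟨-, h₁⟩ ⟨m₂, i₂, j₂⟩ ⟨-, h₂⟩ heq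
    simp only [shift, Prod.mk.injEq] at heq
    have hm : m₁ = m₂ := by
      have := congrArg (· / w.length) heq.1
      simp only [add_comm _ i₁, add_comm _ i₂, Nat.add_mul_div_right _ _ hL,
        Nat.div_eq_of_lt (h₁.le_and_lt_length.1.trans_lt h₁.le_and_lt_length.2),
        Nat.div_eq_of_lt (h₂.le_and_lt_length.1.trans_lt h₂.le_and_lt_length.2), zero_add] at this
      exact this
    subst hm
    rw [Nat.add_left_cancel heq.1, Nat.add_left_cancel heq.2]
  have hfull : (0, 6 * w.length - 1) ∉ shift '' (Set.Iio 6 ×ˢ S) := by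
    rintro ⟨⟨m, i', j'⟩, ⟨-, hrun⟩, heq⟩
    simp only [shift, Prod.mk.injEq] at heq
    have := IsHPRunL.le_and_lt_length (show IsHPRunL w i' j' from hrun)
    omega
  rw [hpRunCount, hset, Set.ncard_union_eq (Set.disjoint_singleton_right.mpr hfull)
    (((Set.finite_Iio 6).prod (finite_setOf_isHPRunL w)).image _), hinj.ncard_image,
    Set.ncard_prod, Set.ncard_singleton, ← hpRunCount]
  simp

end BarCube

lemma pow_six_mod_five (n : ℕ) : 6 ^ n % 5 = 1 := by
  rw [Nat.pow_mod]
  norm_num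

lemma pow_six_sub_one_div_five_succ (n : ℕ) :
    (6 ^ (n + 1) - 1) / 5 = 6 * ((6 ^ n - 1) / 5) + 1 := by
  have hmod := pow_six_mod_five n
  rw [pow_succ]
  omega

lemma cast_pow_six_sub_one_div_five (n : ℕ) :
    (((6 ^ n - 1) / 5 : ℕ) : ℝ) = (6 ^ n - 1) / 5 := by
  have hmod := pow_six_mod_five n
  have h : 5 * ((6 ^ n - 1) / 5) + 1 = 6 ^ n := by
    generalize 6 ^ n = x at hmod ⊢
    omega
  rw [eq_div_iff (by norm_num), eq_sub_iff_add_eq, mul_comm]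
  exact_mod_cast h

section SeqWord
variable {A : Type*} (s : List A)

lemma seqWord_succ (n : ℕ) :
    seqWord s (n + 1) = barCube (fun a => (a.1, a.2 + 2 ^ n)) (seqWord s n) := rfl

lemma length_seqWord (n : ℕ) : (seqWord s n).length = 6 ^ n * s.length := by
  induction n with
  | zero => simp [seqWord]
  | succ n ih => rw [seqWord_succ, length_barCube, ih, pow_succ]; ring

lemma snd_lt_of_mem_seqWord {n : ℕ} : ∀ a ∈ seqWord s n, a.2 < 2 ^ n := by
  induction n with
  | zero => simp [seqWord]
  | succ n ih =>
    simp only [seqWord_succ, barCube, List.mem_append, List.mem_map, or_self, pow_succ]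
    rintro a (ha | ⟨b, hb, rfl⟩)
    · linarith [ih a ha]
    · linarith [ih b hb]

lemma hpRunCount_seqWord_succ (hs : s ≠ []) (n : ℕ) :
    hpRunCount (seqWord s (n + 1)) = 6 * hpRunCount (seqWord s n) + 1 := by
  refine hpRunCount_barCube (fun a b h => by simpa [Prod.ext_iff] using h)
    (fun a ha b hb h => ?_) ?_
  · have := snd_lt_of_mem_seqWord s a ha
    rw [h] at this
    omega
  · rw [length_seqWord]
    exact Nat.mul_pos (by positivity) (List.length_pos_iff.mpr hs)

lemma hpRunCount_seqWord (hs : s ≠ []) (n : ℕ) :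
    hpRunCount (seqWord s n) = 6 ^ n * hpRunCount s + (6 ^ n - 1) / 5 := by
  induction n with
  | zero => simpa [seqWord] using hpRunCount_map (fun a b h => (Prod.mk.inj h).1) s
  | succ n ih =>
    rw [hpRunCount_seqWord_succ s hs, ih, pow_six_sub_one_div_five_succ, pow_succ]
    ring

end SeqWord

open Filter in
/-- For a nonempty word `s` with `r` hp-runs and length `ℓ`, the words
`s_n` of the construction satisfy `|s_n| = 6^n ℓ` and
`hp-runs(s_n) = 6^n r + (6^n - 1)/5`, so the hp-run density of `s_n`
tends to `r/ℓ + 1/(5ℓ)`. -/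
theorem density_improvement {A : Type*} (s : List A) (hs : s ≠ []) :
    (∀ n, (seqWord s n).length = 6 ^ n * s.length) ∧
    (∀ n, hpRunCount (seqWord s n) = 6 ^ n * hpRunCount s + (6 ^ n - 1) / 5) ∧
    Tendsto (fun n => (hpRunCount (seqWord s n) : ℝ) / (seqWord s n).length)
      atTop
      (nhds ((hpRunCount s : ℝ) / s.length + 1 / (5 * s.length))) := by
  refine ⟨length_seqWord s, hpRunCount_seqWord s hs, ?_⟩
  have hℓ : (s.length : ℝ) ≠ 0 := by exact_mod_cast (List.length_pos_iff.mpr hs).ne'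
  have hdensity : ∀ n : ℕ, (hpRunCount (seqWord s n) : ℝ) / (seqWord s n).length =
      hpRunCount s / s.length + (1 - (1 / 6 : ℝ) ^ n) / (5 * s.length) := fun n => by
    rw [hpRunCount_seqWord s hs, length_seqWord]
    push_cast
    rw [cast_pow_six_sub_one_div_five, one_div_pow]
    field_simp
  simp_rw [hdensity]
  simpa using ((tendsto_pow_atTop_nhds_zero_of_lt_one (by norm_num : (0 : ℝ) ≤ 1 / 6)
    (by norm_num)).const_sub 1).div_const (5 * (s.length : ℝ)) |>.const_add
      ((hpRunCount s : ℝ) / s.length)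
end
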